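/- arXiv:2307.07617 — 4 statements merged into one kernel-verified Lean document; each statement's English description precedes it below -/
import Mathlib

section
/- Let X be a finite nonempty index set and I ⊆ X a nonempty subset (the 'interior' points). For each i ∈ I let w_i : X → ℝ be a row of weights satisfying: (i) w_i(i) < 0; (ii) w_i(j) ≥ 0 for every j ≠ i; (iii) ∑_{j ∈ X} w_i(j) = 0. For v : X → ℝ define (Lv)(i) := ∑_{j ∈ X} w_i(j) v(j) for i ∈ I. Define the boundary-neighbor set B := { j ∈ X \ I : w_i(j) ≠ 0 for some i ∈ I }. Assume the connectivity condition: for every i ∈ I there is a finite chain i = i_0, i_1, …, i_m with i_r ∈ I and w_{i_r}(i_{r+1}) > 0 for every r < m, and i_m ∈ B. If v : X → ℝ satisfies (Lv)(i) ≥ 0 for every i ∈ I, then max_{j ∈ I ∪ B} v(j) = max_{j ∈ B} v(j); that is, the maximum of v over I ∪ B is attained on B. -/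
/-!
If `v` attains its maximum over `I ∪ B` at an interior point `i`, then `(Lv)(i) ≥ 0` rewrites,
using the zero row sum, as `∑ⱼ w_i(j) (v j - v i) ≥ 0`, a sum of nonpositive terms. Hence every
term vanishes and the maximum is also attained at each `j` with `w_i(j) > 0`. Following a
connectivity chain from a maximizer carries the maximum to a point of `B`.
-/

open Finset

theorem Finset.sup'_eq_of_isMaxOn {ι α : Type*} [LinearOrder α] {s : Finset ι} {f : ι → α}
    {b : ι} (H : s.Nonempty) (hb : b ∈ s) (hmax : IsMaxOn f s b) : s.sup' H f = f b :=
  le_antisymm (sup'_le H f fun _ hj => hmax hj) (le_sup' f hb)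

theorem isMaxOn_of_weight_pos {ι : Type*} [Fintype ι] {a v : ι → ℝ} {S : Set ι} {i j : ι}
    (hsum : ∑ k, a k = 0) (hoff : ∀ k, k ≠ i → 0 ≤ a k) (hsupp : ∀ k, a k ≠ 0 → k ∈ S)
    (hmax : IsMaxOn v S i) (hLv : 0 ≤ ∑ k, a k * v k) (hj : 0 < a j) : IsMaxOn v S j := by
  have hterm : ∀ k ∈ univ, a k * (v k - v i) ≤ 0 := by
    intro k _
    by_cases hki : k = i
    · simp [hki]
    by_cases hk : a k = 0
    · simp [hk]
    exact mul_nonpos_of_nonneg_of_nonpos (hoff k hki) (sub_nonpos.2 (hmax (hsupp k hk)))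
  have hshift : ∑ k, a k * (v k - v i) = ∑ k, a k * v k := by
    simp only [mul_sub, sum_sub_distrib, ← sum_mul, hsum, zero_mul, sub_zero]
  have hzero : a j * (v j - v i) = 0 :=
    (sum_eq_zero_iff_of_nonpos hterm).1 (le_antisymm (sum_nonpos hterm) (hshift ▸ hLv)) j
      (mem_univ j)
  have hvj : v j = v i := by
    simpa [sub_eq_zero, hj.ne'] using hzero
  exact fun k hk => hvj ▸ hmax hk

theorem discrete_maximum_principle_general
    {X : Type*} [Fintype X] [DecidableEq X]
    (I : Finset X) (hI : I.Nonempty)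
    (w : X → X → ℝ)
    (hoff : ∀ i ∈ I, ∀ j, j ≠ i → 0 ≤ w i j)
    (hsum : ∀ i ∈ I, ∑ j, w i j = 0)
    (B : Finset X)
    (hB : ∀ j, j ∈ B ↔ j ∉ I ∧ ∃ i ∈ I, w i j ≠ 0)
    (hconn : ∀ i ∈ I, ∃ (m : ℕ) (c : ℕ → X),
      c 0 = i ∧ (∀ r < m, c r ∈ I) ∧ (∀ r < m, 0 < w (c r) (c (r + 1))) ∧ c m ∈ B)
    (v : X → ℝ)
    (hLv : ∀ i ∈ I, 0 ≤ ∑ j, w i j * v j) :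
    ∃ hBne : B.Nonempty,
      (I ∪ B).sup' (hI.mono Finset.subset_union_left) v = B.sup' hBne v := by
  set S := I ∪ B
  have hsupp : ∀ i ∈ I, ∀ j, w i j ≠ 0 → j ∈ (S : Set X) := by
    intro i hi j hj
    by_cases hjI : j ∈ I
    · exact mem_union_left B hjI
    · exact mem_union_right I ((hB j).2 ⟨hjI, i, hi, hj⟩)
  have hchain : ∀ i ∈ I, IsMaxOn v S i → ∃ b ∈ B, IsMaxOn v S b := by
    intro i hi hmax
    obtain ⟨m, c, rfl, hcI, hcw, hcB⟩ := hconn _ hi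
    refine ⟨c m, hcB, Fin.induction (motive := fun r => IsMaxOn v S (c r)) hmax
      (fun r hr => ?_) (Fin.last m)⟩
    exact isMaxOn_of_weight_pos (hsum _ (hcI r r.isLt)) (hoff _ (hcI r r.isLt))
      (hsupp _ (hcI r r.isLt)) hr (hLv _ (hcI r r.isLt)) (hcw r r.isLt)
  obtain ⟨x, hxS, hx⟩ := exists_max_image S v (hI.mono subset_union_left)
  obtain ⟨b, hbB, hb⟩ : ∃ b ∈ B, IsMaxOn v S b := by
    rcases mem_union.1 hxS with hxI | hxB
    · exact hchain x hxI hx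
    · exact ⟨x, hxB, hx⟩
  refine ⟨⟨b, hbB⟩, ?_⟩
  exact (sup'_eq_of_isMaxOn _ (mem_union_right I hbB) hb).trans
    (sup'_eq_of_isMaxOn _ hbB (hb.on_subset subset_union_right)).symm

/-- **Discrete maximum principle** (Lemma 4.3): for diagonally dominant weight rows with
zero row sums at the interior points `I`, under the connectivity condition linking every
interior point to the boundary-neighbor set `B`, any `v` with `(Lv)(i) ≥ 0` on `I`
attains its maximum over `I ∪ B` on `B`. -/
theorem discrete_maximum_principle
    {X : Type*} [Fintype X] [DecidableEq X] [Nonempty X]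
    (I : Finset X) (hI : I.Nonempty)
    (w : X → X → ℝ)
    (hdiag : ∀ i ∈ I, w i i < 0)
    (hoff : ∀ i ∈ I, ∀ j, j ≠ i → 0 ≤ w i j)
    (hsum : ∀ i ∈ I, ∑ j, w i j = 0)
    (B : Finset X)
    (hB : ∀ j, j ∈ B ↔ j ∉ I ∧ ∃ i ∈ I, w i j ≠ 0)
    (hconn : ∀ i ∈ I, ∃ (m : ℕ) (c : ℕ → X),
      c 0 = i ∧ (∀ r < m, c r ∈ I) ∧ (∀ r < m, 0 < w (c r) (c (r + 1))) ∧ c m ∈ B)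
    (v : X → ℝ)
    (hLv : ∀ i ∈ I, 0 ≤ ∑ j, w i j * v j) :
    ∃ hBne : B.Nonempty,
      (I ∪ B).sup' (hI.mono Finset.subset_union_left) v = B.sup' hBne v :=
  discrete_maximum_principle_general I hI w hoff hsum B hB hconn v hLv
end

section
/- Let X be a finite nonempty index set and I ⊆ X a nonempty subset (the 'interior' points). For each i ∈ I let w_i : X → ℝ be a row of weights satisfying: (i) w_i(i) < 0; (ii) w_i(j) ≥ 0 for every j ≠ i; (iii) ∑_{j ∈ X} w_i(j) = 0. For v : X → ℝ define (Lv)(i) := ∑_{j ∈ X} w_i(j) v(j) for i ∈ I. Define the boundary-neighbor set B := { j ∈ X \ I : w_i(j) ≠ 0 for some i ∈ I }. Assume the connectivity condition: for every i ∈ I there is a finite chain i = i_0, i_1, …, i_m with i_r ∈ I and w_{i_r}(i_{r+1}) > 0 for every r < m, and i_m ∈ B. If v : X → ℝ satisfies (Lv)(i) ≤ 0 for every i ∈ I, then min_{j ∈ I ∪ B} v(j) = min_{j ∈ B} v(j); that is, the minimum of v over I ∪ B is attained on B. -/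
/-!
At a point `i` where `v` attains its minimum `M` over `I ∪ B`, the zero row sum turns
`(Lv)(i) ≤ 0` into `∑ⱼ w i j (v j - v i) ≤ 0`, a sum of nonnegative terms; hence `v j = M`
at every `j` with `w i j ≠ 0`. Following the connectivity chain from a minimizer in `I`
therefore carries the value `M` to a point of `B`.
-/

section WeightedRow

variable {ι R : Type*} [Fintype ι] [CommRing R] [LinearOrder R] [IsStrictOrderedRing R]

theorem eq_of_sum_eq_zero_of_sum_mul_nonpos {a v : ι → R} {x : R}
    (hsum : ∑ j, a j = 0) (hL : ∑ j, a j * v j ≤ 0) (hnn : ∀ j, 0 ≤ a j * (v j - x))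
    {j : ι} (hj : a j ≠ 0) : v j = x := by
  have hsum_sub : ∑ k, a k * (v k - x) = ∑ k, a k * v k - (∑ k, a k) * x := by
    simp only [mul_sub, Finset.sum_sub_distrib, Finset.sum_mul]
  have hzero : ∑ k, a k * (v k - x) = 0 :=
    le_antisymm (by rw [hsum_sub, hsum, zero_mul, sub_zero]; exact hL)
      (Finset.sum_nonneg fun k _ => hnn k)
  have hterm := (Finset.sum_eq_zero_iff_of_nonneg fun k _ => hnn k).1 hzero j (Finset.mem_univ j)
  exact sub_eq_zero.1 ((mul_eq_zero.1 hterm).resolve_left hj)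

theorem eq_of_offDiag_nonneg_of_le {a v : ι → R} {i : ι}
    (hoff : ∀ j, j ≠ i → 0 ≤ a j) (hsum : ∑ j, a j = 0) (hL : ∑ j, a j * v j ≤ 0)
    (hmin : ∀ j, a j ≠ 0 → v i ≤ v j) {j : ι} (hj : a j ≠ 0) : v j = v i := by
  refine eq_of_sum_eq_zero_of_sum_mul_nonpos hsum hL (fun k => ?_) hj
  by_cases hki : k = i
  · simp [hki]
  by_cases hak : a k = 0
  · simp [hak]
  exact mul_nonneg (hoff k hki) (sub_nonneg.2 (hmin k hak))

end WeightedRow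

theorem chain_induction {X : Type*} {P : X → Prop} {c : ℕ → X} {m : ℕ} (h0 : P (c 0))
    (hstep : ∀ r < m, P (c r) → P (c (r + 1))) : P (c m) := by
  suffices ∀ r ≤ m, P (c r) from this m le_rfl
  intro r
  induction r with
  | zero => exact fun _ => h0
  | succ r ih => exact fun hr => hstep r hr (ih (Nat.le_of_succ_le hr))

theorem discrete_minimum_principle_general
    {X : Type*} [Fintype X] [DecidableEq X]
    (I : Finset X) (hI : I.Nonempty)
    (w : X → X → ℝ)
    (hoff : ∀ i ∈ I, ∀ j, j ≠ i → 0 ≤ w i j)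
    (hsum : ∀ i ∈ I, ∑ j, w i j = 0)
    (B : Finset X)
    (hB : ∀ j, j ∈ B ↔ j ∉ I ∧ ∃ i ∈ I, w i j ≠ 0)
    (hconn : ∀ i ∈ I, ∃ (m : ℕ) (c : ℕ → X),
      c 0 = i ∧ (∀ r < m, c r ∈ I) ∧ (∀ r < m, 0 < w (c r) (c (r + 1))) ∧ c m ∈ B)
    (v : X → ℝ)
    (hLv : ∀ i ∈ I, ∑ j, w i j * v j ≤ 0) :
    ∃ hBne : B.Nonempty,
      (I ∪ B).inf' (hI.mono Finset.subset_union_left) v = B.inf' hBne v := by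
  obtain ⟨i₀, hi₀⟩ := hI
  obtain ⟨m₀, c₀, -, -, -, hc₀⟩ := hconn i₀ hi₀
  have hBne : B.Nonempty := ⟨c₀ m₀, hc₀⟩
  refine ⟨hBne, ?_⟩
  set M := (I ∪ B).inf' _ v
  have hneighbor : ∀ i ∈ I, ∀ j, w i j ≠ 0 → j ∈ I ∪ B := fun i hi j hj =>
    Finset.mem_union.2 (or_iff_not_imp_left.2 fun hjI => (hB j).2 ⟨hjI, i, hi, hj⟩)
  have hspread : ∀ i ∈ I, v i = M → ∀ j, w i j ≠ 0 → v j = M := fun i hi hvi j hj =>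
    (eq_of_offDiag_nonneg_of_le (hoff i hi) (hsum i hi) (hLv i hi)
      (fun k hk => hvi ▸ Finset.inf'_le v (hneighbor i hi k hk)) hj).trans hvi
  obtain ⟨x, hx, hxM⟩ := Finset.exists_mem_eq_inf' ⟨i₀, Finset.mem_union_left B hi₀⟩ v
  obtain ⟨b, hb, hbM⟩ : ∃ b ∈ B, v b = M := by
    rcases Finset.mem_union.1 hx with hxI | hxB
    · obtain ⟨m, c, rfl, hcI, hcw, hcB⟩ := hconn x hxI
      exact ⟨c m, hcB, chain_induction (P := fun y => v y = M) hxM.symm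
        fun r hr hr' => hspread _ (hcI r hr) hr' _ (hcw r hr).ne'⟩
    · exact ⟨x, hxB, hxM.symm⟩
  exact le_antisymm (Finset.inf'_mono v Finset.subset_union_right hBne)
    (hbM ▸ Finset.inf'_le v hb)

/-- **Discrete minimum principle** (Corollary 4.4): for diagonally dominant weight rows with
zero row sums at the interior points `I`, under the connectivity condition linking every
interior point to the boundary-neighbor set `B`, any `v` with `(Lv)(i) ≤ 0` on `I`
attains its minimum over `I ∪ B` on `B`. -/
theorem discrete_minimum_principle
    {X : Type*} [Fintype X] [DecidableEq X] [Nonempty X]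
    (I : Finset X) (hI : I.Nonempty)
    (w : X → X → ℝ)
    (hdiag : ∀ i ∈ I, w i i < 0)
    (hoff : ∀ i ∈ I, ∀ j, j ≠ i → 0 ≤ w i j)
    (hsum : ∀ i ∈ I, ∑ j, w i j = 0)
    (B : Finset X)
    (hB : ∀ j, j ∈ B ↔ j ∉ I ∧ ∃ i ∈ I, w i j ≠ 0)
    (hconn : ∀ i ∈ I, ∃ (m : ℕ) (c : ℕ → X),
      c 0 = i ∧ (∀ r < m, c r ∈ I) ∧ (∀ r < m, 0 < w (c r) (c (r + 1))) ∧ c m ∈ B)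
    (v : X → ℝ)
    (hLv : ∀ i ∈ I, ∑ j, w i j * v j ≤ 0) :
    ∃ hBne : B.Nonempty,
      (I ∪ B).inf' (hI.mono Finset.subset_union_left) v = B.inf' hBne v :=
  discrete_minimum_principle_general I hI w hoff hsum B hB hconn v hLv
end

section
/- Let X be a finite nonempty index set and I ⊆ X a nonempty subset (the 'interior' points). For each i ∈ I let w_i : X → ℝ be a row of weights satisfying: (i) w_i(i) < 0; (ii) w_i(j) ≥ 0 for every j ≠ i; (iii) ∑_{j ∈ X} w_i(j) = 0. Define the boundary-neighbor set B := { j ∈ X \ I : w_i(j) ≠ 0 for some i ∈ I }. Assume the connectivity condition: for every i ∈ I there is a finite chain i = i_0, i_1, …, i_m with i_r ∈ I and w_{i_r}(i_{r+1}) > 0 for every r < m, and i_m ∈ B. Then the square matrix (w_i(j))_{i,j ∈ I} is invertible; equivalently, the only function u : I → ℝ satisfying ∑_{j ∈ I} w_i(j) u(j) = 0 for all i ∈ I is u ≡ 0. -/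
/-!
Discrete maximum principle. Subtracting the row sum `∑ j, w i j = 0` shows that if `v` is
`w`-harmonic at `i` and attains its maximum there, then `∑ j, w i j * (v j - v i) = 0` is a sum of
nonpositive terms, so the maximum propagates to every `k` with `w i k > 0`. Along the chains of the
connectivity condition it reaches a point outside `I`. A kernel vector extended by zero off `I` is
harmonic on `I`, so it is `≤ 0` and, applied to its negative, `≥ 0`.
-/

open Finset

theorem eq_of_forall_le_of_weight_pos {X : Type*} [Fintype X] {w v : X → ℝ} {i k : X}
    (hoff : ∀ j, j ≠ i → 0 ≤ w j) (hsum : ∑ j, w j = 0) (hharm : ∑ j, w j * v j = 0)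
    (hmax : ∀ j, v j ≤ v i) (hk : 0 < w k) : v k = v i := by
  have hzero : ∑ j, w j * (v j - v i) = 0 := by
    simp only [mul_sub, sum_sub_distrib, hharm, ← sum_mul, hsum, zero_mul, sub_zero]
  have hnonpos : ∀ j ∈ univ, w j * (v j - v i) ≤ 0 := by
    intro j _
    rcases eq_or_ne j i with rfl | hj
    · simp
    · exact mul_nonpos_of_nonneg_of_nonpos (hoff j hj) (sub_nonpos.2 (hmax j))
  have hterm := (sum_eq_zero_iff_of_nonpos hnonpos).1 hzero k (mem_univ k)
  linarith [(mul_eq_zero.1 hterm).resolve_left hk.ne']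

theorem eq_of_forall_le_of_chain {X : Type*} [Fintype X] {I : Finset X} {w : X → X → ℝ}
    {v : X → ℝ} (hoff : ∀ i ∈ I, ∀ j, j ≠ i → 0 ≤ w i j) (hsum : ∀ i ∈ I, ∑ j, w i j = 0)
    (hharm : ∀ i ∈ I, ∑ j, w i j * v j = 0) {c : ℕ → X} (hmax : ∀ x, v x ≤ v (c 0)) :
    ∀ {m : ℕ}, (∀ r < m, c r ∈ I) → (∀ r < m, 0 < w (c r) (c (r + 1))) → v (c m) = v (c 0)
  | 0, _, _ => rfl
  | m + 1, hI, hw => by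
    have ih : v (c m) = v (c 0) :=
      eq_of_forall_le_of_chain hoff hsum hharm hmax (fun r hr => hI r (by omega))
        (fun r hr => hw r (by omega))
    have hmI := hI m m.lt_succ_self
    rw [← ih] at hmax ⊢
    exact eq_of_forall_le_of_weight_pos (hoff _ hmI) (hsum _ hmI) (hharm _ hmI) hmax
      (hw m m.lt_succ_self)

theorem exists_notMem_le_of_harmonic {X : Type*} [Fintype X] {I : Finset X} {w : X → X → ℝ}
    {v : X → ℝ} (hoff : ∀ i ∈ I, ∀ j, j ≠ i → 0 ≤ w i j) (hsum : ∀ i ∈ I, ∑ j, w i j = 0)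
    (hconn : ∀ i ∈ I, ∃ (m : ℕ) (c : ℕ → X),
      c 0 = i ∧ (∀ r < m, c r ∈ I) ∧ (∀ r < m, 0 < w (c r) (c (r + 1))) ∧ c m ∉ I)
    (hharm : ∀ i ∈ I, ∑ j, w i j * v j = 0) (x : X) : ∃ b ∉ I, v x ≤ v b := by
  obtain ⟨i, -, hi⟩ := exists_max_image univ v ⟨x, mem_univ x⟩
  have hmax : ∀ y, v y ≤ v i := fun y => hi y (mem_univ y)
  by_cases hiI : i ∈ I
  · obtain ⟨m, c, rfl, hcI, hcw, hcm⟩ := hconn i hiI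
    exact ⟨c m, hcm, eq_of_forall_le_of_chain hoff hsum hharm hmax hcI hcw ▸ hmax x⟩
  · exact ⟨i, hiI, hmax x⟩

theorem eq_zero_of_harmonic_of_eq_zero_off {X : Type*} [Fintype X] {I : Finset X}
    {w : X → X → ℝ} {v : X → ℝ} (hoff : ∀ i ∈ I, ∀ j, j ≠ i → 0 ≤ w i j)
    (hsum : ∀ i ∈ I, ∑ j, w i j = 0)
    (hconn : ∀ i ∈ I, ∃ (m : ℕ) (c : ℕ → X),
      c 0 = i ∧ (∀ r < m, c r ∈ I) ∧ (∀ r < m, 0 < w (c r) (c (r + 1))) ∧ c m ∉ I)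
    (hharm : ∀ i ∈ I, ∑ j, w i j * v j = 0) (hoffI : ∀ j ∉ I, v j = 0) (x : X) : v x = 0 := by
  have hle : ∀ u : X → ℝ, (∀ i ∈ I, ∑ j, w i j * u j = 0) → (∀ j ∉ I, u j = 0) → u x ≤ 0 := by
    intro u hu hu0
    obtain ⟨b, hb, hxb⟩ := exists_notMem_le_of_harmonic hoff hsum hconn hu x
    exact hxb.trans_eq (hu0 b hb)
  have hneg := hle (-v) (fun i hi => by simp [hharm i hi]) (fun j hj => by simp [hoffI j hj])
  exact le_antisymm (hle v hharm hoffI) (neg_nonpos.1 hneg)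

theorem eq_zero_of_sum_interior_eq_zero {X : Type*} [Fintype X] {I : Finset X}
    {w : X → X → ℝ} (hoff : ∀ i ∈ I, ∀ j, j ≠ i → 0 ≤ w i j) (hsum : ∀ i ∈ I, ∑ j, w i j = 0)
    (hconn : ∀ i ∈ I, ∃ (m : ℕ) (c : ℕ → X),
      c 0 = i ∧ (∀ r < m, c r ∈ I) ∧ (∀ r < m, 0 < w (c r) (c (r + 1))) ∧ c m ∉ I)
    {u : X → ℝ} (hu : ∀ i ∈ I, ∑ j ∈ I, w i j * u j = 0) : ∀ j ∈ I, u j = 0 := by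
  intro j hj
  have hharm : ∀ i ∈ I, ∑ x, w i x * Set.indicator (↑I) u x = 0 := fun i hi => by
    simp only [← Set.indicator_mul_right, sum_indicator_subset _ (subset_univ I), hu i hi]
  have := eq_zero_of_harmonic_of_eq_zero_off hoff hsum hconn hharm
    (fun x hx => Set.indicator_of_notMem (mem_coe.not.2 hx) u) j
  rwa [Set.indicator_of_mem (mem_coe.2 hj)] at this

theorem isUnit_of_forall_sum_eq_zero {X : Type*} [DecidableEq X] {I : Finset X}
    {w : X → X → ℝ}
    (hker : ∀ u : X → ℝ, (∀ i ∈ I, ∑ j ∈ I, w i j * u j = 0) → ∀ j ∈ I, u j = 0) :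
    IsUnit (Matrix.of fun i j : {x // x ∈ I} => w i j) := by
  refine Matrix.mulVec_injective_iff_isUnit.1 ?_
  rw [← Matrix.coe_mulVecLin, injective_iff_map_eq_zero]
  intro v hv
  set u : X → ℝ := Function.extend Subtype.val v 0
  have hu : ∀ j : {x // x ∈ I}, u j = v j := Subtype.val_injective.extend_apply v 0
  funext j
  rw [← hu j]
  refine hker u (fun i hi => ?_) j j.2
  rw [← sum_coe_sort I]
  simpa [Matrix.mulVec, dotProduct, hu] using congrFun hv ⟨i, hi⟩

theorem interior_block_invertible_general
    {X : Type*} [Fintype X] [DecidableEq X]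
    (I : Finset X)
    (w : X → X → ℝ)
    (hoff : ∀ i ∈ I, ∀ j, j ≠ i → 0 ≤ w i j)
    (hsum : ∀ i ∈ I, ∑ j, w i j = 0)
    (B : Finset X)
    (hB : ∀ j, j ∈ B ↔ j ∉ I ∧ ∃ i ∈ I, w i j ≠ 0)
    (hconn : ∀ i ∈ I, ∃ (m : ℕ) (c : ℕ → X),
      c 0 = i ∧ (∀ r < m, c r ∈ I) ∧ (∀ r < m, 0 < w (c r) (c (r + 1))) ∧ c m ∈ B) :
    IsUnit (Matrix.of fun i j : {x // x ∈ I} => w i j) ∧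
    ∀ u : X → ℝ, (∀ i ∈ I, ∑ j ∈ I, w i j * u j = 0) → ∀ j ∈ I, u j = 0 := by
  have hconn' : ∀ i ∈ I, ∃ (m : ℕ) (c : ℕ → X),
      c 0 = i ∧ (∀ r < m, c r ∈ I) ∧ (∀ r < m, 0 < w (c r) (c (r + 1))) ∧ c m ∉ I :=
    fun i hi => by
      obtain ⟨m, c, h0, hI, hw, hB'⟩ := hconn i hi
      exact ⟨m, c, h0, hI, hw, ((hB _).1 hB').1⟩
  have hker : ∀ u : X → ℝ, (∀ i ∈ I, ∑ j ∈ I, w i j * u j = 0) → ∀ j ∈ I, u j = 0 :=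
    fun u => eq_zero_of_sum_interior_eq_zero hoff hsum hconn'
  exact ⟨isUnit_of_forall_sum_eq_zero hker, hker⟩

/-- Well-posedness of the volume-constrained discrete Poisson system: the interior block
`(w i j)_{i,j ∈ I}` of the stabilized Laplacian matrix is invertible; equivalently the
only `u` with `∑_{j ∈ I} w i j * u j = 0` for all `i ∈ I` vanishes on `I`. -/
theorem interior_block_invertible
    {X : Type*} [Fintype X] [DecidableEq X] [Nonempty X]
    (I : Finset X) (hI : I.Nonempty)
    (w : X → X → ℝ)
    (hdiag : ∀ i ∈ I, w i i < 0)
    (hoff : ∀ i ∈ I, ∀ j, j ≠ i → 0 ≤ w i j)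
    (hsum : ∀ i ∈ I, ∑ j, w i j = 0)
    (B : Finset X)
    (hB : ∀ j, j ∈ B ↔ j ∉ I ∧ ∃ i ∈ I, w i j ≠ 0)
    (hconn : ∀ i ∈ I, ∃ (m : ℕ) (c : ℕ → X),
      c 0 = i ∧ (∀ r < m, c r ∈ I) ∧ (∀ r < m, 0 < w (c r) (c (r + 1))) ∧ c m ∈ B) :
    IsUnit (Matrix.of fun i j : {x // x ∈ I} => w i j) ∧
    ∀ u : X → ℝ, (∀ i ∈ I, ∑ j ∈ I, w i j * u j = 0) → ∀ j ∈ I, u j = 0 :=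
  interior_block_invertible_general I w hoff hsum B hB hconn
end

section
/- Let X be a finite nonempty index set and I ⊆ X a nonempty proper subset (the 'interior' points). For each i ∈ I let w_i : X → ℝ be a row of weights satisfying: (i) w_i(i) < 0; (ii) w_i(j) ≥ 0 for every j ≠ i; (iii) ∑_{j ∈ X} w_i(j) = 0. For v : X → ℝ define (Lv)(i) := ∑_{j ∈ X} w_i(j) v(j) for i ∈ I. Define the boundary-neighbor set B := { j ∈ X \ I : w_i(j) ≠ 0 for some i ∈ I }. Assume the connectivity condition: for every i ∈ I there is a finite chain i = i_0, i_1, …, i_m with i_r ∈ I and w_{i_r}(i_{r+1}) > 0 for every r < m, and i_m ∈ B. Let c ≥ 0, let v : X → ℝ satisfy v(j) ≥ 0 for all j ∈ X and (Lv)(i) ≤ −1/2 for all i ∈ I, and let e : X → ℝ satisfy |(Le)(i)| ≤ c for all i ∈ I. Then for every j ∈ I, |e(j)| ≤ 2c · max_{j' ∈ X} v(j') + max_{j' ∈ X \ I} |e(j')|. -/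
/-!
Each row of `w` has nonnegative off-diagonal entries and sums to zero, so `(Lg)(i) ≥ 0` makes
`g i` dominated by a weighted average of its neighbours; a maximum of `g` at an interior point
therefore spreads along every chain of positive weights, and by connectivity it reaches a point
outside `I`. Applied to `±e - 2c v - max_{X \ I} |e|`, whose image under `L` is nonnegative on `I`
and which is nonpositive off `I`, this maximum principle gives the estimate.
-/

open Finset

section

variable {X : Type*} [Fintype X]

def ConnectedToExterior (I : Finset X) (w : X → X → ℝ) : Prop :=
  ∀ i ∈ I, ∃ (m : ℕ) (c : ℕ → X),
    c 0 = i ∧ (∀ r < m, c r ∈ I) ∧ (∀ r < m, 0 < w (c r) (c (r + 1))) ∧ c m ∉ I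

theorem sum_mul_sub_const_of_sum_eq_zero {w : X → ℝ} (hsum : ∑ j, w j = 0) (g : X → ℝ)
    (a : ℝ) : ∑ j, w j * (g j - a) = ∑ j, w j * g j := by
  simp only [mul_sub, sum_sub_distrib, ← sum_mul, hsum, zero_mul, sub_zero]

theorem eq_of_isMax_of_sum_mul_nonneg {w g : X → ℝ} {i : X} (hoff : ∀ j ≠ i, 0 ≤ w j)
    (hsum : ∑ j, w j = 0) (hg : 0 ≤ ∑ j, w j * g j) (hmax : ∀ y, g y ≤ g i) {j : X}
    (hj : 0 < w j) : g j = g i := by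
  have hterm : ∀ k ∈ univ, w k * (g k - g i) ≤ 0 := by
    intro k _
    by_cases hk : k = i
    · simp [hk]
    · exact mul_nonpos_of_nonneg_of_nonpos (hoff k hk) (sub_nonpos.mpr (hmax k))
  have hzero : ∑ k, w k * (g k - g i) = 0 :=
    le_antisymm (sum_nonpos hterm) (by rwa [sum_mul_sub_const_of_sum_eq_zero hsum])
  have := (sum_eq_zero_iff_of_nonpos hterm).mp hzero j (mem_univ j)
  rcases mul_eq_zero.mp this with h | h
  · exact absurd h hj.ne'
  · linarith

theorem exists_notMem_isMax_of_sum_mul_nonneg [Nonempty X] {I : Finset X} {w : X → X → ℝ}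
    (hoff : ∀ i ∈ I, ∀ j ≠ i, 0 ≤ w i j) (hsum : ∀ i ∈ I, ∑ j, w i j = 0)
    (hconn : ConnectedToExterior I w) {g : X → ℝ} (hg : ∀ i ∈ I, 0 ≤ ∑ j, w i j * g j) :
    ∃ x ∉ I, ∀ y, g y ≤ g x := by
  obtain ⟨i, -, hi⟩ := exists_max_image univ g univ_nonempty
  have hmax : ∀ y, g y ≤ g i := fun y => hi y (mem_univ y)
  by_cases hiI : i ∈ I
  swap
  · exact ⟨i, hiI, hmax⟩
  obtain ⟨m, c, hc0, hcI, hcpos, hcm⟩ := hconn i hiI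
  have hchain : ∀ r ≤ m, g (c r) = g i := by
    intro r
    induction r with
    | zero => simp [hc0]
    | succ r ih =>
      intro hr
      have hr' : r < m := by omega
      rw [← ih hr'.le] at hmax ⊢
      exact eq_of_isMax_of_sum_mul_nonneg (hoff _ (hcI r hr')) (hsum _ (hcI r hr'))
        (hg _ (hcI r hr')) hmax (hcpos r hr')
  exact ⟨c m, hcm, fun y => (hchain m le_rfl).symm ▸ hmax y⟩

theorem le_of_barrier [Nonempty X] {I : Finset X} {w : X → X → ℝ}
    (hoff : ∀ i ∈ I, ∀ j ≠ i, 0 ≤ w i j) (hsum : ∀ i ∈ I, ∑ j, w i j = 0)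
    (hconn : ConnectedToExterior I w) {c : ℝ} (hc : 0 ≤ c) {v : X → ℝ}
    (hv0 : ∀ j, 0 ≤ v j) (hvL : ∀ i ∈ I, ∑ j, w i j * v j ≤ -(1 / 2)) {f : X → ℝ}
    (hfL : ∀ i ∈ I, -c ≤ ∑ j, w i j * f j) {K : ℝ} (hK : ∀ x ∉ I, f x ≤ K) (j : X) :
    f j ≤ 2 * c * v j + K := by
  set u : X → ℝ := fun x => f x - 2 * c * v x - K
  have huL : ∀ i ∈ I, 0 ≤ ∑ j, w i j * u j := by
    intro i hi
    have hexpand : ∑ j, w i j * u j = ∑ j, w i j * f j - 2 * c * ∑ j, w i j * v j := by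
      rw [sum_mul_sub_const_of_sum_eq_zero (hsum i hi), mul_sum, ← sum_sub_distrib]
      exact sum_congr rfl fun k _ => by ring
    rw [hexpand]
    nlinarith [hfL i hi, hvL i hi]
  obtain ⟨x, hx, hmax⟩ := exists_notMem_isMax_of_sum_mul_nonneg hoff hsum hconn huL
  have hux : u x ≤ 0 := by
    have := mul_nonneg hc (hv0 x)
    simp only [u]
    linarith [hK x hx]
  linarith [hmax j]

end

theorem discrete_barrier_estimate_general
    {X : Type*} [Fintype X] [DecidableEq X] [Nonempty X]
    (I : Finset X)
    (hproper : (Finset.univ \ I).Nonempty)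
    (w : X → X → ℝ)
    (hoff : ∀ i ∈ I, ∀ j, j ≠ i → 0 ≤ w i j)
    (hsum : ∀ i ∈ I, ∑ j, w i j = 0)
    (B : Finset X)
    (hB : ∀ j, j ∈ B ↔ j ∉ I ∧ ∃ i ∈ I, w i j ≠ 0)
    (hconn : ∀ i ∈ I, ∃ (m : ℕ) (c : ℕ → X),
      c 0 = i ∧ (∀ r < m, c r ∈ I) ∧ (∀ r < m, 0 < w (c r) (c (r + 1))) ∧ c m ∈ B)
    (c : ℝ) (hc : 0 ≤ c)
    (v : X → ℝ)
    (hv0 : ∀ j, 0 ≤ v j)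
    (hvL : ∀ i ∈ I, ∑ j, w i j * v j ≤ -(1 / 2))
    (e : X → ℝ)
    (heL : ∀ i ∈ I, |∑ j, w i j * e j| ≤ c) :
    ∀ j ∈ I, |e j| ≤
      2 * c * Finset.univ.sup' Finset.univ_nonempty v +
        (Finset.univ \ I).sup' hproper (fun j' => |e j'|) := by
  intro j _
  have hconn' : ConnectedToExterior I w := fun i hi => by
    obtain ⟨m, ch, h0, hI, hpos, hB'⟩ := hconn i hi
    exact ⟨m, ch, h0, hI, hpos, ((hB _).mp hB').1⟩
  set K := (Finset.univ \ I).sup' hproper (fun j' => |e j'|)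
  have hK : ∀ x ∉ I, |e x| ≤ K := fun x hx =>
    le_sup' (fun j' => |e j'|) (mem_sdiff.mpr ⟨mem_univ x, hx⟩)
  have hupper := le_of_barrier hoff hsum hconn' hc hv0 hvL
    (fun i hi => (abs_le.mp (heL i hi)).1) (fun x hx => (le_abs_self _).trans (hK x hx)) j
  have hlower : -e j ≤ 2 * c * v j + K :=
    le_of_barrier hoff hsum hconn' hc hv0 hvL (f := -e)
    (fun i hi => by simpa [sum_neg_distrib] using (abs_le.mp (heL i hi)).2)
    (fun x hx => (neg_le_abs _).trans (hK x hx)) j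
  have hvj : v j ≤ univ.sup' univ_nonempty v := le_sup' v (mem_univ j)
  have := mul_le_mul_of_nonneg_left hvj (mul_nonneg zero_le_two hc)
  exact abs_le.mpr ⟨by linarith, by linarith⟩

/-- Discrete barrier (comparison-function) estimate from the proof of Theorem 4.5:
with a nonnegative barrier `v` satisfying `(Lv)(i) ≤ -1/2` on the interior `I` and an
error vector `e` with `|(Le)(i)| ≤ c` on `I`, one has
`|e j| ≤ 2c · max v + max_{X \ I} |e|` for every interior point `j`. -/
theorem discrete_barrier_estimate
    {X : Type*} [Fintype X] [DecidableEq X] [Nonempty X]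
    (I : Finset X) (hI : I.Nonempty)
    (hproper : (Finset.univ \ I).Nonempty)
    (w : X → X → ℝ)
    (hdiag : ∀ i ∈ I, w i i < 0)
    (hoff : ∀ i ∈ I, ∀ j, j ≠ i → 0 ≤ w i j)
    (hsum : ∀ i ∈ I, ∑ j, w i j = 0)
    (B : Finset X)
    (hB : ∀ j, j ∈ B ↔ j ∉ I ∧ ∃ i ∈ I, w i j ≠ 0)
    (hconn : ∀ i ∈ I, ∃ (m : ℕ) (c : ℕ → X),
      c 0 = i ∧ (∀ r < m, c r ∈ I) ∧ (∀ r < m, 0 < w (c r) (c (r + 1))) ∧ c m ∈ B)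
    (c : ℝ) (hc : 0 ≤ c)
    (v : X → ℝ)
    (hv0 : ∀ j, 0 ≤ v j)
    (hvL : ∀ i ∈ I, ∑ j, w i j * v j ≤ -(1 / 2))
    (e : X → ℝ)
    (heL : ∀ i ∈ I, |∑ j, w i j * e j| ≤ c) :
    ∀ j ∈ I, |e j| ≤
      2 * c * Finset.univ.sup' Finset.univ_nonempty v +
        (Finset.univ \ I).sup' hproper (fun j' => |e j'|) :=
  discrete_barrier_estimate_general I hproper w hoff hsum B hB hconn c hc v hv0 hvL e heL
end
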